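/- arXiv:2101.00103 — 5 statements merged into one kernel-verified Lean document; each statement's English description precedes it below -/
import Mathlib

section
/- Let α > 2t ≥ 0 and k > t ≥ 0. Then U^k(ℤ_{2^α}) ≅ U^{k-t}(ℤ_{2^{α-2t}}). -/
/-- Cyclic factors of the group of units of `ZMod (p^a)` (Lemma int1). -/
noncomputable def pUnitsList (p a : ℕ) : List ℕ :=
  if p = 2 then (if 2 ≤ a then [2, 2 ^ (a - 2)] else [1]) else [p - 1, p ^ (a - 1)]

/-- Cyclic factors of `U(ZMod n)`, via the prime-power factorization of `n`. -/
noncomputable def unitsList (n : ℕ) : List ℕ :=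
  (Nat.factorization n).support.toList.flatMap fun p => pUnitsList p (Nat.factorization n p)

/-- One application of the units functor to a product of cyclic rings. -/
noncomputable def uStep (l : List ℕ) : List ℕ := l.flatMap unitsList

/-- Cyclic factors of the k-th iterated group of units `U^k(ZMod n)`. -/
noncomputable def UkList (k n : ℕ) : List ℕ := uStep^[k] [n]

/-- The k-th iterated group of units `U^k(ZMod n)`, as the product of its cyclic factors. -/
abbrev Uk (k n : ℕ) : Type := ∀ i : Fin (UkList k n).length, ZMod ((UkList k n).get i)

lemma unitsList_two_pow (a : ℕ) (h : 0 < a) : unitsList (2^a) = pUnitsList 2 a := by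
  unfold unitsList
  rw [Nat.Prime.factorization_pow Nat.prime_two, Finsupp.support_single_ne_zero _ h.ne']
  simp [Finsupp.single_apply]

lemma uStep_append (l1 l2 : List ℕ) : uStep (l1++l2) = uStep l1 ++ uStep l2 :=
  List.flatMap_append ..

lemma uStep_iter_append (m : ℕ) (l1 l2 : List ℕ) :
    uStep^[m] (l1++l2) = uStep^[m] l1 ++ uStep^[m] l2 := by
  induction m generalizing l1 l2 with
  | zero => rfl
  | succ m ih => simp [Function.iterate_succ_apply, uStep_append, ih]

lemma unitsList_one : unitsList 1 = [] := by simp [unitsList]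

lemma uStep_two : uStep [2] = [1] := by
  have := unitsList_two_pow 1 one_pos
  simp only [pow_one] at this
  simp [uStep, this, pUnitsList]

lemma uStep_one : uStep [1] = [] := by simp [uStep, unitsList_one]

lemma uStep_iter_two (m : ℕ) (hm : 2 ≤ m) : uStep^[m] [2] = [] := by
  obtain ⟨j, rfl⟩ := Nat.exists_eq_add_of_le hm
  rw [add_comm, Function.iterate_add_apply]
  have : uStep^[2] [2] = [] := by
    simp [Function.iterate_succ_apply, uStep_two, uStep_one]
  rw [this]
  induction j with
  | zero => rfl
  | succ j ih => rw [Function.iterate_succ_apply, show uStep [] = [] from rfl, ih (by omega)]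

/-- one peeling step -/
lemma UkList_step (a m : ℕ) (ha : 2 ≤ a) :
    UkList (m+1) (2^a) = uStep^[m] [2] ++ UkList m (2^(a-2)) := by
  unfold UkList
  rw [Function.iterate_succ_apply]
  have h1 : uStep [2^a] = [2] ++ [2^(a-2)] := by
    simp [uStep, unitsList_two_pow a (by omega), pUnitsList, if_pos ha]
  rw [h1, uStep_iter_append]

/-- Lemma A -/
lemma UkList_reduce (t : ℕ) : ∀ a k : ℕ, 2*t < a → t + 2 ≤ k →
    UkList k (2^a) = UkList (k-t) (2^(a-2*t)) := by
  induction t with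
  | zero => intro a k _ _; simp
  | succ t ih =>
    intro a k ha hk
    obtain ⟨k, rfl⟩ : ∃ k', k = k' + 1 := ⟨k-1, by omega⟩
    rw [UkList_step a k (by omega), uStep_iter_two k (by omega), List.nil_append,
      ih (a-2) k (by omega) (by omega), show a-2-2*t = a-2*(t+1) by omega,
      show k-t = k+1-(t+1) by omega]


def piZCongr {l1 l2 : List ℕ} (h : l1 = l2) :
    (∀ i : Fin l1.length, ZMod (l1.get i)) ≃+ (∀ i : Fin l2.length, ZMod (l2.get i)) := by
  subst h; exact AddEquiv.refl _

def piZConsOne (l : List ℕ) :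
    (∀ i : Fin (1::l : List ℕ).length, ZMod ((1::l : List ℕ).get i)) ≃+
      (∀ i : Fin l.length, ZMod (l.get i)) where
  toFun f i := f i.succ
  invFun f := Fin.cases (motive := fun i => ZMod ((1::l : List ℕ).get i)) 0 f
  left_inv f := by
    funext i
    induction i using Fin.cases with
    | zero => exact @Subsingleton.elim (ZMod 1) _ _ _
    | succ j => simp
  right_inv f := by funext i; simp
  map_add' f g := rfl



theorem stmt_2 (α t k : ℕ) (h1 : 2 * t < α) (h2 : t < k) :
    Nonempty (Uk k (2 ^ α) ≃+ Uk (k - t) (2 ^ (α - 2 * t))) := by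
  rcases Nat.eq_zero_or_pos t with rfl | ht
  · simp only [Nat.sub_zero, Nat.mul_zero]
    exact ⟨AddEquiv.refl _⟩
  rcases Nat.lt_or_ge (t+1) k with hk | hk
  · exact ⟨piZCongr (UkList_reduce t α k h1 (by omega))⟩
  · have hkt : k = t + 1 := by omega
    subst hkt
    have h0 : UkList (t+1) (2^α) = UkList 2 (2^(α-2*(t-1))) := by
      rw [UkList_reduce (t-1) α (t+1) (by omega) (by omega),
        show t+1-(t-1) = 2 by omega]
    have h3 : UkList (t+1) (2^α) = 1 :: UkList 1 (2^(α-2*t)) := by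
      rw [h0, UkList_step (α-2*(t-1)) 1 (by omega), Function.iterate_one, uStep_two,
        show α-2*(t-1)-2 = α-2*t by omega]
      rfl
    rw [show t+1-t = 1 by omega]
    exact ⟨(piZCongr h3).trans (piZConsOne _)⟩
end

section
/- For all k ≥ 1, α ≥ 1, and t ≥ 0, U^k(ℤ_{2^α}) ≅ U^{k+t}(ℤ_{2^{α+2t}}). -/
abbrev PiZMod (l : List ℕ) : Type := ∀ i : Fin l.length, ZMod (l.get i)

noncomputable def PiZMod.consOneAddEquiv (l : List ℕ) : PiZMod (1 :: l) ≃+ PiZMod l :=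
  (Fin.consLinearEquiv ℕ fun i : Fin (1 :: l).length => ZMod ((1 :: l).get i)).toAddEquiv.symm
    |>.trans (AddEquiv.uniqueProd (N := ZMod 1))

lemma PiZMod.nonempty_addEquiv_of_eq {l₁ l₂ : List ℕ} (h : l₁ = l₂) :
    Nonempty (PiZMod l₁ ≃+ PiZMod l₂) :=
  h ▸ ⟨AddEquiv.refl _⟩

lemma PiZMod.nonempty_addEquiv_append_of_forall_eq_one {l₁ : List ℕ} (h : ∀ x ∈ l₁, x = 1)
    (l₂ : List ℕ) : Nonempty (PiZMod (l₁ ++ l₂) ≃+ PiZMod l₂) := by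
  induction l₁ with
  | nil => exact ⟨AddEquiv.refl _⟩
  | cons a l ih =>
    obtain rfl : a = 1 := h a List.mem_cons_self
    obtain ⟨e⟩ := ih fun x hx => h x (List.mem_cons_of_mem _ hx)
    exact ⟨(PiZMod.consOneAddEquiv (l ++ l₂)).trans e⟩

lemma unitsList_two_pow_s3 {m : ℕ} (hm : 1 ≤ m) :
    unitsList (2 ^ m) = if 2 ≤ m then [2, 2 ^ (m - 2)] else [1] := by
  rw [unitsList, Nat.prime_two.factorization_pow, Finsupp.support_single _ (by omega)]
  simp [pUnitsList]

lemma uStep_iterate_nil (k : ℕ) : uStep^[k] [] = [] :=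
  Function.iterate_fixed rfl k

lemma uStep_iterate_append (k : ℕ) (l₁ l₂ : List ℕ) :
    uStep^[k] (l₁ ++ l₂) = uStep^[k] l₁ ++ uStep^[k] l₂ := by
  induction k generalizing l₁ l₂ with
  | zero => rfl
  | succ k ih => simp only [Function.iterate_succ_apply, uStep, List.flatMap_append, ih]

lemma eq_one_of_mem_uStep_iterate_two {k : ℕ} (hk : 1 ≤ k) :
    ∀ x ∈ uStep^[k] [2], x = 1 := by
  obtain ⟨j, rfl⟩ := Nat.exists_eq_add_of_le' hk
  have h₂ : uStep [2] = [1] := by simpa [uStep] using unitsList_two_pow_s3 (m := 1) le_rfl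
  have h₁ : uStep [1] = [] := by simp [uStep, unitsList_one]
  cases j with
  | zero => simp [h₂]
  | succ j => simp [Function.iterate_succ_apply, h₂, h₁, uStep_iterate_nil]

lemma UkList_succ_two_pow_add_two (k m : ℕ) :
    UkList (k + 1) (2 ^ (m + 2)) = uStep^[k] [2] ++ UkList k (2 ^ m) := by
  have h : uStep [2 ^ (m + 2)] = [2] ++ [2 ^ m] := by simp [uStep, unitsList_two_pow_s3]
  rw [UkList, Function.iterate_succ_apply, h, uStep_iterate_append, UkList]

lemma nonempty_Uk_two_pow_addEquiv_succ {k : ℕ} (hk : 1 ≤ k) (m : ℕ) :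
    Nonempty (Uk k (2 ^ m) ≃+ Uk (k + 1) (2 ^ (m + 2))) := by
  obtain ⟨e⟩ := PiZMod.nonempty_addEquiv_append_of_forall_eq_one
    (eq_one_of_mem_uStep_iterate_two hk) (UkList k (2 ^ m))
  obtain ⟨e'⟩ := PiZMod.nonempty_addEquiv_of_eq (UkList_succ_two_pow_add_two k m)
  exact ⟨(e'.trans e).symm⟩

theorem stmt_3_general (k α t : ℕ) (hk : 1 ≤ k) :
    Nonempty (Uk k (2 ^ α) ≃+ Uk (k + t) (2 ^ (α + 2 * t))) := by
  induction t with
  | zero => exact ⟨AddEquiv.refl _⟩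
  | succ t ih =>
    obtain ⟨e⟩ := ih
    obtain ⟨f⟩ := nonempty_Uk_two_pow_addEquiv_succ (by omega : 1 ≤ k + t) (α + 2 * t)
    exact ⟨e.trans f⟩

theorem stmt_3 (k α t : ℕ) (hk : 1 ≤ k) (hα : 1 ≤ α) :
    Nonempty (Uk k (2 ^ α) ≃+ Uk (k + t) (2 ^ (α + 2 * t))) :=
  stmt_3_general k α t hk
end

section
/- For k ≥ 1 and α ≥ 1: U^k(ℤ_{3^α}) is a boolean ring if and only if α = k, and U^k(ℤ_{3^α}) is trivial if and only if α < k. -/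
lemma unitsList_two : unitsList 2 = [1] := by
  have h : Nat.factorization 2 = Finsupp.single 2 1 := Nat.Prime.factorization Nat.prime_two
  rw [unitsList, h, Finsupp.support_single_ne_zero _ one_ne_zero]
  simp [pUnitsList]

lemma unitsList_three_pow (m : ℕ) (hm : 1 ≤ m) : unitsList (3 ^ m) = [2, 3 ^ (m - 1)] := by
  have h : Nat.factorization (3 ^ m) = Finsupp.single 3 m := by
    simp [Nat.Prime.factorization_pow, Nat.prime_three]
  rw [unitsList, h, Finsupp.support_single_ne_zero _ (by omega)]
  simp [pUnitsList]

lemma uStep_nil : uStep [] = [] := by simp [uStep]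

lemma ukl_one (α : ℕ) (hα : 1 ≤ α) : UkList 1 (3 ^ α) = [2, 3 ^ (α - 1)] := by
  simp [UkList, uStep, unitsList_three_pow α hα]

lemma ukl_ge2 (α : ℕ) : ∀ j, 2 ≤ j → j ≤ α → UkList j (3 ^ α) = [1, 2, 3 ^ (α - j)] := by
  intro j
  induction j with
  | zero => omega
  | succ j ih =>
    intro h1 h2
    rcases Nat.lt_or_ge j 2 with hj | hj
    · -- j + 1 = 2
      have hj1 : j = 1 := by omega
      subst hj1
      rw [show (2 : ℕ) = 1 + 1 from rfl] at *
      rw [UkList, Function.iterate_succ_apply', ← UkList, ukl_one α (by omega)]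
      have : unitsList (3 ^ (α - 1)) = [2, 3 ^ (α - 1 - 1)] := unitsList_three_pow _ (by omega)
      simp [uStep, unitsList_two, this]
      omega
    · rw [UkList, Function.iterate_succ_apply', ← UkList, ih hj (by omega)]
      have : unitsList (3 ^ (α - j)) = [2, 3 ^ (α - j - 1)] := unitsList_three_pow _ (by omega)
      simp [uStep, unitsList_one, unitsList_two, this]
      omega

lemma ukl_succ_alpha (α : ℕ) (hα : 1 ≤ α) : UkList (α + 1) (3 ^ α) = [1] := by
  rcases Nat.lt_or_ge α 2 with h | h
  · have : α = 1 := by omega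
    subst this
    rw [UkList, Function.iterate_succ_apply', ← UkList, ukl_one 1 le_rfl]
    simp [uStep, unitsList_two, unitsList_one]
  · rw [UkList, Function.iterate_succ_apply', ← UkList, ukl_ge2 α α h le_rfl]
    simp [uStep, unitsList_two, unitsList_one]

lemma ukl_gt (α : ℕ) (hα : 1 ≤ α) : ∀ j, α + 2 ≤ j → UkList j (3 ^ α) = [] := by
  intro j
  induction j with
  | zero => omega
  | succ j ih =>
    intro h
    rcases Nat.lt_or_ge j (α + 2) with h2 | h2
    · have : j = α + 1 := by omega
      subst this
      rw [UkList, Function.iterate_succ_apply', ← UkList, ukl_succ_alpha α hα, uStep_one]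
    · rw [UkList, Function.iterate_succ_apply', ← UkList, ih h2, uStep_nil]

lemma zmod2_ne : (0 : ZMod 2) ≠ 1 := by decide

lemma two_ne_zero_zmod3pow (m : ℕ) (hm : 1 ≤ m) : (1 + 1 : ZMod (3 ^ m)) ≠ 0 := by
  intro h
  have h2 : ((2 : ℕ) : ZMod (3 ^ m)) = 0 := by
    rw [Nat.cast_ofNat, ← one_add_one_eq_two, h]
  rw [ZMod.natCast_eq_zero_iff] at h2
  have h3 := Nat.le_of_dvd (by norm_num) h2
  have h4 : 3 ≤ 3 ^ m := Nat.le_self_pow (by omega) 3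
  omega

-- pi over [1,2,3^m] : nontrivial, not boolean
lemma case3 (m : ℕ) (hm : 1 ≤ m) :
    Nontrivial (∀ i : Fin ([1, 2, 3 ^ m] : List ℕ).length, ZMod (([1, 2, 3 ^ m] : List ℕ).get i)) ∧
    ¬ ∀ x : (∀ i : Fin ([1, 2, 3 ^ m] : List ℕ).length, ZMod (([1, 2, 3 ^ m] : List ℕ).get i)),
      x + x = 0 := by
  constructor
  · refine ⟨fun _ => 0, fun _ => 1, fun h => ?_⟩
    have := congrFun h ⟨1, by norm_num⟩
    exact zmod2_ne this
  · intro h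
    have := congrFun (h fun _ => 1) ⟨2, by norm_num⟩
    exact two_ne_zero_zmod3pow m hm this

-- pi over [2,3^m] : nontrivial, not boolean
lemma case2 (m : ℕ) (hm : 1 ≤ m) :
    Nontrivial (∀ i : Fin ([2, 3 ^ m] : List ℕ).length, ZMod (([2, 3 ^ m] : List ℕ).get i)) ∧
    ¬ ∀ x : (∀ i : Fin ([2, 3 ^ m] : List ℕ).length, ZMod (([2, 3 ^ m] : List ℕ).get i)),
      x + x = 0 := by
  constructor
  · refine ⟨fun _ => 0, fun _ => 1, fun h => ?_⟩
    have := congrFun h ⟨0, by norm_num⟩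
    exact zmod2_ne this
  · intro h
    have := congrFun (h fun _ => 1) ⟨1, by norm_num⟩
    exact two_ne_zero_zmod3pow m hm this

-- pi over [1,2,1] and [2,1] : nontrivial and boolean
lemma case121 :
    Nontrivial (∀ i : Fin ([1, 2, 1] : List ℕ).length, ZMod (([1, 2, 1] : List ℕ).get i)) ∧
    ∀ x : (∀ i : Fin ([1, 2, 1] : List ℕ).length, ZMod (([1, 2, 1] : List ℕ).get i)),
      x + x = 0 := by
  constructor
  · refine ⟨fun _ => 0, fun _ => 1, fun h => ?_⟩
    have := congrFun h ⟨1, by norm_num⟩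
    exact zmod2_ne this
  · intro x
    funext i
    fin_cases i
    · exact Subsingleton.elim (α := ZMod 1) _ _
    · exact (show ∀ a : ZMod 2, a + a = 0 by decide) _
    · exact Subsingleton.elim (α := ZMod 1) _ _

lemma case21 :
    Nontrivial (∀ i : Fin ([2, 1] : List ℕ).length, ZMod (([2, 1] : List ℕ).get i)) ∧
    ∀ x : (∀ i : Fin ([2, 1] : List ℕ).length, ZMod (([2, 1] : List ℕ).get i)),
      x + x = 0 := by
  constructor
  · refine ⟨fun _ => 0, fun _ => 1, fun h => ?_⟩
    have := congrFun h ⟨0, by norm_num⟩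
    exact zmod2_ne this
  · intro x
    funext i
    fin_cases i
    · exact (show ∀ a : ZMod 2, a + a = 0 by decide) _
    · exact Subsingleton.elim (α := ZMod 1) _ _

lemma case1 :
    Subsingleton (∀ i : Fin ([1] : List ℕ).length, ZMod (([1] : List ℕ).get i)) := by
  refine ⟨fun a b => funext fun i => ?_⟩
  fin_cases i
  exact Subsingleton.elim (α := ZMod 1) _ _

lemma case0 :
    Subsingleton (∀ i : Fin ([] : List ℕ).length, ZMod (([] : List ℕ).get i)) := by
  refine ⟨fun a b => funext fun i => i.elim0⟩

theorem stmt_14 (k α : ℕ) (hk : 1 ≤ k) (hα : 1 ≤ α) :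
    ((Nontrivial (Uk k (3 ^ α)) ∧ ∀ x : Uk k (3 ^ α), x + x = 0) ↔ α = k) ∧
    (Subsingleton (Uk k (3 ^ α)) ↔ α < k) := by
  rcases lt_trichotomy α k with h | h | h
  · -- α < k : all trivial
    have hsub : Subsingleton (Uk k (3 ^ α)) := by
      unfold Uk
      rcases Nat.lt_or_ge k (α + 2) with h2 | h2
      · have hk1 : k = α + 1 := by omega
        subst hk1
        rw [ukl_succ_alpha α hα]
        exact case1
      · rw [ukl_gt α hα k h2]
        exact case0
    refine ⟨⟨fun ⟨hnt, _⟩ => absurd hsub (not_subsingleton_iff_nontrivial.mpr hnt),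
      fun he => by omega⟩, ⟨fun _ => h, fun _ => hsub⟩⟩
  · -- α = k : boolean
    subst h
    have hC : Nontrivial (Uk α (3 ^ α)) ∧ ∀ x : Uk α (3 ^ α), x + x = 0 := by
      unfold Uk
      rcases Nat.lt_or_ge α 2 with h2 | h2
      · have : α = 1 := by omega
        subst this
        rw [show UkList 1 (3 ^ 1) = [2, 1] by rw [ukl_one 1 le_rfl]; norm_num]
        exact case21
      · rw [show UkList α (3 ^ α) = [1, 2, 1] by rw [ukl_ge2 α α h2 le_rfl]; norm_num]
        exact case121
    exact ⟨⟨fun _ => rfl, fun _ => hC⟩,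
      ⟨fun hs => absurd hs (not_subsingleton_iff_nontrivial.mpr hC.1),
       fun hlt => absurd hlt (lt_irrefl _)⟩⟩
  · -- k < α : nontrivial, not boolean
    have hC : Nontrivial (Uk k (3 ^ α)) ∧ ¬ ∀ x : Uk k (3 ^ α), x + x = 0 := by
      unfold Uk
      rcases Nat.lt_or_ge k 2 with h2 | h2
      · have : k = 1 := by omega
        subst this
        rw [ukl_one α hα]
        exact case2 (α - 1) (by omega)
      · rw [ukl_ge2 α k h2 (by omega)]
        exact case3 (α - k) (by omega)
    exact ⟨⟨fun ⟨_, hb⟩ => absurd hb hC.2, fun he => absurd he (by omega)⟩,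
      ⟨fun hs => absurd hs (not_subsingleton_iff_nontrivial.mpr hC.1),
       fun hlt => absurd hlt (by omega)⟩⟩
end

section
/- Let p be an odd prime with p ≠ 3, and suppose U^k(ℤ_{p^α}) is a boolean ring (a nontrivial elementary abelian 2-group). Then α < k. -/
lemma unitsList_prime_pow {p : ℕ} (hp : p.Prime) (hp2 : p ≠ 2) {m : ℕ} (hm : 1 ≤ m) :
    unitsList (p ^ m) = [p - 1, p ^ (m - 1)] := by
  unfold unitsList
  rw [hp.factorization_pow, Finsupp.support_single_ne_zero p (by omega)]
  simp [pUnitsList, hp2]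

lemma mem_UkList {p α : ℕ} (hp : p.Prime) (hp2 : p ≠ 2) :
    ∀ j, 1 ≤ j → j ≤ α →
      (p - 1) ∈ UkList j (p ^ α) ∧ p ^ (α - j) ∈ UkList j (p ^ α) := by
  intro j
  induction j with
  | zero => omega
  | succ n ih =>
    intro _ hle
    by_cases hn : n = 0
    · subst hn
      have h1 : UkList 1 (p ^ α) = [p - 1, p ^ (α - 1)] := by
        simp [UkList, uStep, unitsList_prime_pow hp hp2 (by omega : 1 ≤ α)]
      rw [h1]; simp
    · obtain ⟨_, hmem⟩ := ih (by omega) (by omega)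
      have hstep : UkList (n + 1) (p ^ α) = uStep (UkList n (p ^ α)) := by
        simp [UkList, Function.iterate_succ_apply']
      rw [hstep]
      have hu : unitsList (p ^ (α - n)) = [p - 1, p ^ (α - n - 1)] :=
        unitsList_prime_pow hp hp2 (by omega)
      unfold uStep
      constructor
      · exact List.mem_flatMap.mpr ⟨_, hmem, by rw [hu]; simp⟩
      · have he : α - (n + 1) = α - n - 1 := by omega
        rw [he]
        exact List.mem_flatMap.mpr ⟨_, hmem, by rw [hu]; simp⟩

theorem stmt_15 (p α k : ℕ) (hp : p.Prime) (hodd : Odd p) (hp3 : p ≠ 3)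
    (hα : 1 ≤ α) (hk : 1 ≤ k)
    (hbool : Nontrivial (Uk k (p ^ α)) ∧ ∀ x : Uk k (p ^ α), x + x = 0) :
    α < k := by
  by_contra h
  push_neg at h
  have hp2 : p ≠ 2 := by
    rintro rfl; have := Nat.odd_iff.mp hodd; omega
  have hp5 : 5 ≤ p := by
    obtain ⟨m, hm⟩ := hodd
    have := hp.two_le
    have h4 : p ≠ 4 := by omega
    omega
  obtain ⟨hmem, -⟩ := mem_UkList (α := α) hp hp2 k hk h
  obtain ⟨i, hi⟩ := List.get_of_mem hmem
  -- build an element that is 1 at index i, 0 elsewhere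
  classical
  let x : Uk k (p ^ α) := Pi.single i 1
  have hx := congrFun (hbool.2 x) i
  have hxi : x i = 1 := Pi.single_eq_same i 1
  have h2 : (1 + 1 : ZMod ((UkList k (p ^ α)).get i)) = 0 := by
    simpa [hxi] using hx
  rw [hi] at h2
  have hne : NeZero (p - 1) := ⟨by omega⟩
  have : ((2 : ℕ) : ZMod (p - 1)) = 0 := by push_cast; linear_combination h2
  rw [ZMod.natCast_eq_zero_iff] at this
  have := Nat.le_of_dvd (by norm_num) this
  omega
end

section
/- If U^k(ℤ_n) is trivial, then for every divisor m of n, U^k(ℤ_m) is trivial. -/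
/-! If `m ∣ n`, every cyclic factor of `U^k(ℤ_m)` divides some cyclic factor of `U^k(ℤ_n)`.
For `k = 1` this is the monotonicity in `a` of the factors `p - 1, p^(a-1)` (resp. `2, 2^(a-2)`)
of `U(ℤ_{p^a})`, and it propagates through the iteration because all factors are nonzero
(the relation would break at a factor `0`, as `unitsList 0` is empty). A product of cyclic
groups is trivial exactly when all its factors are `ℤ_1`, and a divisor of `1` is `1`. -/

def DvdCovered (l l' : List ℕ) : Prop := ∀ x ∈ l, ∃ y ∈ l', x ∣ y

lemma DvdCovered.eq_one {l l' : List ℕ} (h : DvdCovered l l') (h' : ∀ y ∈ l', y = 1) :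
    ∀ x ∈ l, x = 1 := by
  intro x hx
  obtain ⟨y, hy, hxy⟩ := h x hx
  exact Nat.eq_one_of_dvd_one (h' y hy ▸ hxy)

lemma subsingleton_pi_zmod_iff (l : List ℕ) :
    Subsingleton (∀ i : Fin l.length, ZMod (l.get i)) ↔ ∀ x ∈ l, x = 1 := by
  constructor
  · intro hsub x hx
    obtain ⟨i, rfl⟩ := List.get_of_mem hx
    by_contra hne
    have : Nontrivial (ZMod (l.get i)) := ZMod.nontrivial_iff.mpr hne
    exact not_nontrivial (∀ j : Fin l.length, ZMod (l.get j)) (Pi.nontrivial_at i)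
  · intro hone
    have (i : Fin l.length) : Subsingleton (ZMod (l.get i)) :=
      ZMod.subsingleton_iff.mpr (hone _ (List.get_mem _ _))
    infer_instance

lemma pUnitsList_pos {p : ℕ} (hp : 2 ≤ p) (a : ℕ) : ∀ x ∈ pUnitsList p a, 0 < x := by
  unfold pUnitsList
  split_ifs <;> simp only [List.mem_cons, List.not_mem_nil, or_false, forall_eq_or_imp, forall_eq]
  · exact ⟨two_pos, by positivity⟩
  · exact one_pos
  · exact ⟨by omega, by positivity⟩

lemma pUnitsList_dvdCovered (p : ℕ) {a b : ℕ} (hb : 1 ≤ b) (hba : b ≤ a) :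
    DvdCovered (pUnitsList p b) (pUnitsList p a) := by
  intro x hx
  unfold pUnitsList at hx ⊢
  split_ifs at hx ⊢ <;>
    simp only [List.mem_cons, List.not_mem_nil, or_false, exists_eq_or_imp, exists_eq_left]
      at hx ⊢
  · rcases hx with rfl | rfl
    · exact Or.inl dvd_rfl
    · exact Or.inr (Nat.pow_dvd_pow 2 (by omega))
  · exact Or.inl (hx ▸ one_dvd 2)
  · omega
  · exact hx ▸ dvd_rfl
  · rcases hx with rfl | rfl
    · exact Or.inl dvd_rfl
    · exact Or.inr (Nat.pow_dvd_pow p (by omega))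

lemma mem_unitsList {n x : ℕ} :
    x ∈ unitsList n ↔ ∃ p ∈ n.primeFactors, x ∈ pUnitsList p (n.factorization p) := by
  simp only [unitsList, List.mem_flatMap, Finset.mem_toList, Nat.support_factorization]

lemma unitsList_pos (n : ℕ) : ∀ x ∈ unitsList n, 0 < x := by
  intro x hx
  obtain ⟨p, hp, hx⟩ := mem_unitsList.mp hx
  exact pUnitsList_pos (Nat.prime_of_mem_primeFactors hp).two_le _ x hx

lemma unitsList_dvdCovered {m n : ℕ} (hn : n ≠ 0) (hmn : m ∣ n) :
    DvdCovered (unitsList m) (unitsList n) := by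
  intro x hx
  obtain ⟨p, hpm, hx⟩ := mem_unitsList.mp hx
  obtain ⟨hp, hpdvd, hm⟩ := Nat.mem_primeFactors.mp hpm
  obtain ⟨y, hy, hxy⟩ := pUnitsList_dvdCovered p (hp.factorization_pos_of_dvd hm hpdvd)
    ((Nat.factorization_le_iff_dvd hm hn).mpr hmn p) x hx
  exact ⟨y, mem_unitsList.mpr ⟨p, Nat.primeFactors_mono hmn hn hpm, hy⟩, hxy⟩

lemma uStep_dvdCovered {l l' : List ℕ} (h : DvdCovered l l') (hl' : ∀ y ∈ l', 0 < y) :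
    DvdCovered (uStep l) (uStep l') := by
  intro x hx
  obtain ⟨a, ha, hx⟩ := List.mem_flatMap.mp hx
  obtain ⟨b, hb, hab⟩ := h a ha
  obtain ⟨y, hy, hxy⟩ := unitsList_dvdCovered (hl' b hb).ne' hab x hx
  exact ⟨y, List.mem_flatMap.mpr ⟨b, hb, hy⟩, hxy⟩

lemma UkList_succ (k n : ℕ) : UkList (k + 1) n = uStep (UkList k n) :=
  Function.iterate_succ_apply' _ _ _

lemma UkList_pos {n : ℕ} (hn : 0 < n) : ∀ k, ∀ x ∈ UkList k n, 0 < x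
  | 0 => by simpa [UkList] using hn
  | k + 1 => by
    intro x hx
    rw [UkList_succ] at hx
    obtain ⟨a, -, hx⟩ := List.mem_flatMap.mp hx
    exact unitsList_pos a x hx

lemma UkList_dvdCovered {m n : ℕ} (hn : 0 < n) (hmn : m ∣ n) :
    ∀ k, DvdCovered (UkList k m) (UkList k n)
  | 0 => by simpa [DvdCovered, UkList] using hmn
  | k + 1 => by
    rw [UkList_succ, UkList_succ]
    exact uStep_dvdCovered (UkList_dvdCovered hn hmn k) (UkList_pos hn k)

theorem stmt_19 (k n m : ℕ) (hn : 0 < n) (hm : m ∣ n)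
    (htriv : Subsingleton (Uk k n)) : Subsingleton (Uk k m) :=
  (subsingleton_pi_zmod_iff _).mpr <|
    (UkList_dvdCovered hn hm k).eq_one ((subsingleton_pi_zmod_iff _).mp htriv)
end
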